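/- arXiv:1406.5332 — 2 statements merged into one kernel-verified Lean document; each statement's English description precedes it below -/
import Mathlib

section
/- The set P₋₂ = { ord_n(-2) : n ∈ ℕ, n > 1, n odd } equals ℕ \ {0, 2}: the multiplicative order of -2 modulo n is never 2 for any odd n > 1, but every positive integer k ≠ 2 occurs as ord_n(-2) for some odd n > 1. -/
/-!
If `(-2)² = 1` in a ring then `3 = 0` there, and hence `-2 = 1`; so `-2` never has order `2`.
Modulo an odd `n` it is a unit, so its order is positive. Conversely `-2 ≡ 1 (mod 3)` gives
order `1`, and for `k ≥ 3` the odd modulus `n = |(-2)^k - 1|` gives order exactly `k`: for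
`0 < m < k` the nonzero integer `(-2)^m - 1` has absolute value at most `2^m + 1 < 2^k - 1 ≤ n`,
so `n` does not divide it.
-/

theorem orderOf_neg_two_ne_two {R : Type*} [Ring R] : orderOf (-2 : R) ≠ 2 := by
  rw [Ne, orderOf_eq_prime_iff, not_and_not_right]
  intro hsq
  have h3 : (3 : R) = 0 := by
    rw [even_two.neg_pow] at hsq
    calc (3 : R) = 2 ^ 2 - 1 := by norm_num
      _ = 0 := sub_eq_zero.mpr hsq
  calc (-2 : R) = 1 - 3 := by norm_num
    _ = 1 := by rw [h3, sub_zero]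

theorem ZMod.isUnit_neg_two {n : ℕ} (hn : Odd n) : IsUnit (-2 : ZMod n) := by
  have h2 : IsUnit ((2 : ℕ) : ZMod n) :=
    (ZMod.isUnit_iff_coprime 2 n).mpr (Nat.coprime_two_left.mpr hn)
  exact_mod_cast h2.neg

theorem ZMod.orderOf_intCast_eq {N : ℕ} {a : ℤ} {k : ℕ} (hk : 0 < k) (hN : (N : ℤ) ∣ a ^ k - 1)
    (hsmall : ∀ m, 0 < m → m < k → a ^ m ≠ 1 ∧ |a ^ m - 1| < N) : orderOf (a : ZMod N) = k := by
  have pow_eq_one_iff (m : ℕ) : (a : ZMod N) ^ m = 1 ↔ (N : ℤ) ∣ a ^ m - 1 := by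
    rw [← ZMod.intCast_zmod_eq_zero_iff_dvd]
    push_cast
    exact sub_eq_zero.symm
  refine (orderOf_eq_iff hk).mpr ⟨(pow_eq_one_iff k).mpr hN, fun m hmk hm hpow => ?_⟩
  obtain ⟨hne, hlt⟩ := hsmall m hm hmk
  exact hne (sub_eq_zero.mp (Int.eq_zero_of_abs_lt_dvd ((pow_eq_one_iff m).mp hpow) hlt))

theorem neg_two_pow_ne_one {m : ℕ} (hm : m ≠ 0) : (-2 : ℤ) ^ m ≠ 1 := by
  simp [pow_eq_one_iff_cases, hm]

theorem abs_neg_two_pow_sub_one_le (m : ℕ) : |(-2 : ℤ) ^ m - 1| ≤ 2 ^ m + 1 := by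
  simpa [abs_pow] using abs_sub ((-2 : ℤ) ^ m) 1

theorem two_pow_sub_one_le_abs_neg_two_pow_sub_one (k : ℕ) :
    2 ^ k - 1 ≤ |(-2 : ℤ) ^ k - 1| := by
  simpa [abs_pow] using abs_sub_abs_le_abs_sub ((-2 : ℤ) ^ k) 1

theorem eight_le_two_pow {k : ℕ} (hk : 3 ≤ k) : (8 : ℤ) ≤ 2 ^ k :=
  calc (8 : ℤ) = 2 ^ 3 := by norm_num
    _ ≤ 2 ^ k := pow_le_pow_right₀ (by norm_num) hk

theorem odd_natAbs_neg_two_pow_sub_one {k : ℕ} (hk : k ≠ 0) : Odd ((-2 : ℤ) ^ k - 1).natAbs :=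
  Int.natAbs_odd.mpr (((even_neg.mpr even_two).pow_of_ne_zero hk).sub_odd odd_one)

theorem one_lt_natAbs_neg_two_pow_sub_one {k : ℕ} (hk : 3 ≤ k) :
    1 < ((-2 : ℤ) ^ k - 1).natAbs := by
  rw [← Int.ofNat_lt, Int.natCast_natAbs]
  have := two_pow_sub_one_le_abs_neg_two_pow_sub_one k
  have := eight_le_two_pow hk
  push_cast
  linarith

theorem orderOf_neg_two_natAbs_pow_sub_one {k : ℕ} (hk : 3 ≤ k) :
    orderOf ((-2 : ℤ) : ZMod ((-2 : ℤ) ^ k - 1).natAbs) = k := by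
  refine ZMod.orderOf_intCast_eq (by omega) (Int.natAbs_dvd.mpr dvd_rfl) fun m hm hmk => ?_
  refine ⟨neg_two_pow_ne_one hm.ne', ?_⟩
  rw [Int.natCast_natAbs]
  have hpow : (2 : ℤ) ^ m * 2 ≤ 2 ^ k := by
    rw [← pow_succ]
    exact pow_le_pow_right₀ (by norm_num) hmk
  have := eight_le_two_pow hk
  have := abs_neg_two_pow_sub_one_le m
  have := two_pow_sub_one_le_abs_neg_two_pow_sub_one k
  linarith

/-- P₋₂ = { ord_n(-2) : n > 1 odd } = ℕ \ {0,2}. -/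
theorem orderSet_of_neg_two :
    {k : ℕ | ∃ n : ℕ, 1 < n ∧ Odd n ∧ orderOf (((-2 : ℤ)) : ZMod n) = k}
      = {k : ℕ | k ≠ 0 ∧ k ≠ 2} := by
  ext k
  simp only [Set.mem_ofPred_eq]
  constructor
  · rintro ⟨n, -, hodd, rfl⟩
    have : NeZero n := ⟨hodd.pos.ne'⟩
    rw [Int.cast_neg, Int.cast_ofNat]
    exact ⟨orderOf_ne_zero_iff.mpr (ZMod.isUnit_neg_two hodd).isOfFinOrder,
      orderOf_neg_two_ne_two⟩
  · rintro ⟨hk0, hk2⟩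
    obtain rfl | hk : k = 1 ∨ 3 ≤ k := by omega
    · exact ⟨3, by norm_num, by decide, orderOf_eq_one_iff.mpr (by decide)⟩
    · exact ⟨_, one_lt_natAbs_neg_two_pow_sub_one hk, odd_natAbs_neg_two_pow_sub_one hk0,
        orderOf_neg_two_natAbs_pow_sub_one hk⟩
end

section
/- If two matrices M, M′ ∈ Mat(2,ℤ) are conjugate over ℤ/nℤ (i.e. there is P ∈ GL(2, ℤ/nℤ) with P·M·P⁻¹ ≡ M′ mod n), then they have the same trace, the same determinant, and the same mgcd modulo n, where mgcd([[α,β],[γ,δ]]) = gcd(β, γ, δ-α). -/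
/-! Trace and determinant are conjugation invariants over any commutative ring. For the mgcd,
`d ∣ mgcdMod M n` exactly when `d ∣ n` and `M` is scalar modulo `d`. Conjugacy modulo `n`
descends to conjugacy modulo every divisor `d` of `n`, and a matrix conjugate to a scalar matrix
is that scalar matrix, so both mgcds have the same divisors. -/

/-- The mgcd of a 2×2 integer matrix, reduced with the modulus n:
gcd(β, γ, δ-α, n). -/
def mgcdMod (M : Matrix (Fin 2) (Fin 2) ℤ) (n : ℕ) : ℕ :=
  Nat.gcd (Int.gcd (M 0 1) (Int.gcd (M 1 0) (M 1 1 - M 0 0))) n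

namespace Matrix

theorem mem_range_scalar_fin_two_iff {R : Type*} [Semiring R] (A : Matrix (Fin 2) (Fin 2) R) :
    A ∈ Set.range (scalar (Fin 2)) ↔ A 0 1 = 0 ∧ A 1 0 = 0 ∧ A 1 1 = A 0 0 := by
  constructor
  · rintro ⟨c, rfl⟩
    simp
  · rintro ⟨h01, h10, h11⟩
    refine ⟨A 0 0, ?_⟩
    ext i j
    fin_cases i <;> fin_cases j <;> simp [h01, h10, h11]

theorem mem_range_scalar_iff_of_mul_eq_mul {m R : Type*} [Fintype m] [DecidableEq m]
    [CommSemiring R]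
    {P A B : Matrix m m R} (hP : IsUnit P) (h : P * A = B * P) :
    A ∈ Set.range (scalar m) ↔ B ∈ Set.range (scalar m) := by
  have hcomm (c : R) : P * scalar m c = scalar m c * P :=
    (scalar_commute c (fun _ ↦ Commute.all _ _) P).eq.symm
  constructor
  · rintro ⟨c, rfl⟩
    exact ⟨c, hP.mul_right_cancel (by rw [← h, hcomm])⟩
  · rintro ⟨c, rfl⟩
    exact ⟨c, hP.mul_left_cancel (by rw [h, hcomm])⟩

theorem map_intCast_castHom {m o : Type*} {n d : ℕ} (hd : d ∣ n) (M : Matrix m o ℤ) :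
    (M.map (Int.cast : ℤ → ZMod n)).map (ZMod.castHom hd (ZMod d)) = M.map Int.cast := by
  ext i j
  simp

end Matrix

open Matrix

theorem dvd_mgcdMod_iff (M : Matrix (Fin 2) (Fin 2) ℤ) (n d : ℕ) :
    d ∣ mgcdMod M n ↔
      d ∣ n ∧ M.map (Int.cast : ℤ → ZMod d) ∈ Set.range (scalar (Fin 2)) := by
  simp only [mgcdMod, Nat.dvd_gcd_iff, Int.dvd_gcd_iff, Int.dvd_coe_gcd_iff,
    mem_range_scalar_fin_two_iff, map_apply, ← sub_eq_zero (b := ((M 0 0 : ℤ) : ZMod d)),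
    ← Int.cast_sub, ZMod.intCast_zmod_eq_zero_iff_dvd]
  tauto

/-- Matrices conjugate over ℤ/nℤ share trace, determinant and mgcd modulo n. -/
theorem local_conjugacy_invariants (n : ℕ) (M M' : Matrix (Fin 2) (Fin 2) ℤ)
    (P : Matrix (Fin 2) (Fin 2) (ZMod n)) (hP : IsUnit P.det)
    (h : P * M.map (Int.cast : ℤ → ZMod n) = M'.map (Int.cast : ℤ → ZMod n) * P) :
    (M.map (Int.cast : ℤ → ZMod n)).trace = (M'.map (Int.cast : ℤ → ZMod n)).trace ∧
    (M.map (Int.cast : ℤ → ZMod n)).det = (M'.map (Int.cast : ℤ → ZMod n)).det ∧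
    mgcdMod M n = mgcdMod M' n := by
  have hPu : IsUnit P := (isUnit_iff_isUnit_det P).mpr hP
  have hconj : M'.map Int.cast = P * M.map (Int.cast : ℤ → ZMod n) * P⁻¹ := by
    rw [h, mul_nonsing_inv_cancel_right _ _ hP]
  refine ⟨by rw [hconj, trace_conj hPu], by rw [hconj, det_conj hPu], ?_⟩
  refine eq_of_forall_dvd' fun d ↦ ?_
  rw [dvd_mgcdMod_iff, dvd_mgcdMod_iff]
  refine and_congr_right fun hd ↦ ?_
  let f := (ZMod.castHom hd (ZMod d)).mapMatrix (m := Fin 2)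
  have hd_conj : f P * M.map Int.cast = M'.map Int.cast * f P := by
    simpa only [f, map_mul, RingHom.mapMatrix_apply, map_intCast_castHom] using congrArg f h
  exact mem_range_scalar_iff_of_mul_eq_mul (hPu.map f) hd_conj
end
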